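/- arXiv:2103.01648 — 2 statements merged into one kernel-verified Lean document; each statement's English description precedes it below -/
import Mathlib

section
/- Let J : ℝ^d × ℝ^l → ℝ be continuously differentiable and coercive, convex in x for each z with a unique x-minimizer. For the alternate minimization sequence (xₙ, zₙ) with ∂J/∂z(xₙ, zₙ₊₁) = 0, J(xₙ, zₙ₊₁) ≤ J(xₙ, zₙ), and xₙ₊₁ = argmin_x J(x, zₙ₊₁), every accumulation point (x*, z*) of the sequence is a stationary point of J, i.e., ∇J(x*, z*) = 0, and all accumulation points have the same function value. -/
open Filter

private lemma antitone_tendsto_of_clusterPt {a : ℕ → ℝ} (ha : Antitone a) {c : ℝ}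
    (hc : MapClusterPt c atTop a) : Tendsto a atTop (nhds c) := by
  have hfreq : ∀ ε : ℝ, 0 < ε → ∃ᶠ n in atTop, |a n - c| < ε := by
    intro ε hε
    have := mapClusterPt_iff_frequently.1 hc (Metric.ball c ε) (Metric.ball_mem_nhds c hε)
    simpa [Metric.mem_ball, Real.dist_eq] using this
  have hlb : ∀ n, c ≤ a n := by
    intro n
    by_contra h
    push_neg at h
    obtain ⟨m, hm1, hm2⟩ := ((hfreq (c - a n) (by linarith)).and_eventually
      (eventually_ge_atTop n)).exists
    have h3 : a m ≤ a n := ha hm2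
    have h4 := abs_lt.1 hm1
    linarith [h4.1]
  rw [Metric.tendsto_atTop]
  intro ε hε
  obtain ⟨m, hm⟩ := (hfreq ε hε).exists
  refine ⟨m, fun n hn => ?_⟩
  have h1 : a n ≤ a m := ha hn
  have h2 := hlb n
  have h3 := abs_lt.1 hm
  rw [Real.dist_eq, abs_lt]
  constructor <;> linarith [h3.1, h3.2]

theorem stmt_2 {d l : ℕ}
    (J : EuclideanSpace ℝ (Fin d) × EuclideanSpace ℝ (Fin l) → ℝ)
    (hJ : ContDiff ℝ 1 J)
    (hcoer : ∀ M : ℝ, ∃ R : ℝ, ∀ p, R ≤ ‖p‖ → M ≤ J p)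
    (hconv : ∀ zz, ConvexOn ℝ Set.univ (fun xx => J (xx, zz)))
    (huniq : ∀ zz, ∃! xx, ∀ x', J (xx, zz) ≤ J (x', zz))
    (x : ℕ → EuclideanSpace ℝ (Fin d)) (z : ℕ → EuclideanSpace ℝ (Fin l))
    (hz_stat : ∀ n, fderiv ℝ (fun w => J (x n, w)) (z (n + 1)) = 0)
    (hz_dec : ∀ n, J (x n, z (n + 1)) ≤ J (x n, z n))
    (hx_min : ∀ n x', J (x (n + 1), z (n + 1)) ≤ J (x', z (n + 1))) :
    (∀ p, MapClusterPt p atTop (fun n => (x n, z n)) → fderiv ℝ J p = 0) ∧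
      (∀ p q, MapClusterPt p atTop (fun n => (x n, z n)) →
        MapClusterPt q atTop (fun n => (x n, z n)) → J p = J q) := by
  classical
  have hJd : Differentiable ℝ J := hJ.differentiable one_ne_zero
  have hJc : Continuous J := hJd.continuous
  have hfc : Continuous fun q => fderiv ℝ J q := hJ.continuous_fderiv one_ne_zero
  have hanti : Antitone fun n => J (x n, z n) := antitone_nat_of_succ_le fun n =>
    (hx_min n (x n)).trans (hz_dec n)
  have hJcluster : ∀ p, MapClusterPt p atTop (fun n => (x n, z n)) →
      Tendsto (fun n => J (x n, z n)) atTop (nhds (J p)) := by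
    intro p hp
    exact antitone_tendsto_of_clusterPt hanti (hp.continuousAt_comp hJc.continuousAt)
  refine ⟨?_, fun p q hp hq => tendsto_nhds_unique (hJcluster p hp) (hJcluster q hq)⟩
  rintro ⟨x0, z0⟩ hp
  have hac : Tendsto (fun n => J (x n, z n)) atTop (nhds (J (x0, z0))) := hJcluster _ hp
  -- boundedness of the x-sequence
  obtain ⟨R, hR⟩ := hcoer (J (x 0, z 0) + 1)
  have hxb : ∀ n, x n ∈ Metric.closedBall (0 : EuclideanSpace ℝ (Fin d)) R := by
    intro n
    have h1 : J (x n, z n) ≤ J (x 0, z 0) := hanti (Nat.zero_le n)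
    rw [Metric.mem_closedBall, dist_zero_right]
    by_contra h
    push_neg at h
    have h2 : R ≤ ‖(x n, z n)‖ := le_trans h.le (norm_fst_le (x n, z n))
    have := hR (x n, z n) h2
    linarith
  -- subsequence converging to (x0, z0)
  obtain ⟨φ, hφ, hφt⟩ := TopologicalSpace.FirstCountableTopology.tendsto_subseq hp
  -- further subsequence on which the shifted x-iterates converge
  obtain ⟨x'', -, σ, hσ, hσt⟩ := tendsto_subseq_of_bounded
    (Metric.isBounded_closedBall (x := (0 : EuclideanSpace ℝ (Fin d))) (r := R))
    (x := fun k => x (φ (k + 1) - 1)) (fun k => hxb (φ (k + 1) - 1))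
  set nn : ℕ → ℕ := fun j => φ (σ j + 1) - 1 with hnn
  have hn1 : ∀ j, nn j + 1 = φ (σ j + 1) := by
    intro j
    have h1 : σ j + 1 ≤ φ (σ j + 1) := hφ.le_apply
    simp only [hnn]
    omega
  have hnj : ∀ j, j ≤ nn j := by
    intro j
    have h1 : σ j + 1 ≤ φ (σ j + 1) := hφ.le_apply
    have h2 : j ≤ σ j := hσ.le_apply
    simp only [hnn]
    omega
  have hnt : Tendsto nn atTop atTop := tendsto_atTop_mono hnj tendsto_id
  have hnt1 : Tendsto (fun j => nn j + 1) atTop atTop := (tendsto_add_atTop_nat 1).comp hnt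
  have hσ1 : Tendsto (fun j => σ j + 1) atTop atTop :=
    tendsto_atTop_mono (fun j => le_trans hσ.le_apply (Nat.le_succ _)) tendsto_id
  have hxn : Tendsto (fun j => x (nn j)) atTop (nhds x'') := hσt
  have hzφ : Tendsto (fun k => z (φ k)) atTop (nhds z0) :=
    (continuous_snd.tendsto _).comp hφt
  have hxφ : Tendsto (fun k => x (φ k)) atTop (nhds x0) :=
    (continuous_fst.tendsto _).comp hφt
  have hzn : Tendsto (fun j => z (nn j + 1)) atTop (nhds z0) := by
    have heq : (fun j => z (nn j + 1)) = fun j => z (φ (σ j + 1)) :=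
      funext fun j => by rw [hn1]
    rw [heq]
    exact hzφ.comp hσ1
  have hxn1 : Tendsto (fun j => x (nn j + 1)) atTop (nhds x0) := by
    have heq : (fun j => x (nn j + 1)) = fun j => x (φ (σ j + 1)) :=
      funext fun j => by rw [hn1]
    rw [heq]
    exact hxφ.comp hσ1
  have hpair : Tendsto (fun j => (x (nn j), z (nn j + 1))) atTop (nhds (x'', z0)) :=
    hxn.prodMk_nhds hzn
  -- squeeze: J along the mixed sequence tends to J (x0, z0)
  have hJsq : Tendsto (fun j => J (x (nn j), z (nn j + 1))) atTop (nhds (J (x0, z0))) := by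
    refine tendsto_of_tendsto_of_tendsto_of_le_of_le (hac.comp hnt1) (hac.comp hnt) ?_ ?_
    · exact fun j => hx_min (nn j) (x (nn j))
    · exact fun j => hz_dec (nn j)
  have hJx'' : J (x'', z0) = J (x0, z0) :=
    tendsto_nhds_unique ((hJc.tendsto _).comp hpair) hJsq
  -- x0 minimizes J (·, z0)
  have hmin0 : ∀ x', J (x0, z0) ≤ J (x', z0) := by
    intro x'
    have h1 : Tendsto (fun j => J (x (nn j + 1), z (nn j + 1))) atTop (nhds (J (x0, z0))) :=
      hac.comp hnt1
    have h2 : Tendsto (fun j => J (x', z (nn j + 1))) atTop (nhds (J (x', z0))) :=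
      (hJc.tendsto _).comp (tendsto_const_nhds.prodMk_nhds hzn)
    exact le_of_tendsto_of_tendsto' h1 h2 fun j => hx_min (nn j) x'
  -- x'' minimizes J (·, z0) too, so x'' = x0 by uniqueness
  have hminx'' : ∀ x', J (x'', z0) ≤ J (x', z0) := by
    intro x'
    rw [hJx'']
    exact hmin0 x'
  obtain ⟨m, -, hmu⟩ := huniq z0
  have hxx : x'' = x0 := (hmu x'' hminx'').trans (hmu x0 hmin0).symm
  -- partial derivative in z vanishes
  have hder_z : ∀ a b, fderiv ℝ (fun w => J (a, w)) b =
      (fderiv ℝ J (a, b)).comp (ContinuousLinearMap.inr ℝ _ _) := fun a b =>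
    ((hJd (a, b)).hasFDerivAt.comp b (hasFDerivAt_prodMk_right a b)).fderiv
  have hgz : Continuous fun q : EuclideanSpace ℝ (Fin d) × EuclideanSpace ℝ (Fin l) =>
      (fderiv ℝ J q).comp (ContinuousLinearMap.inr ℝ _ _) :=
    (((ContinuousLinearMap.compL ℝ (EuclideanSpace ℝ (Fin l))
      (EuclideanSpace ℝ (Fin d) × EuclideanSpace ℝ (Fin l)) ℝ).flip
      (ContinuousLinearMap.inr ℝ (EuclideanSpace ℝ (Fin d))
        (EuclideanSpace ℝ (Fin l)))).continuous).comp hfc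
  have hz0 : (fderiv ℝ J (x0, z0)).comp
      (ContinuousLinearMap.inr ℝ (EuclideanSpace ℝ (Fin d)) (EuclideanSpace ℝ (Fin l))) = 0 := by
    have hzero : ∀ j, (fderiv ℝ J (x (nn j), z (nn j + 1))).comp
        (ContinuousLinearMap.inr ℝ _ _) = 0 := by
      intro j
      rw [← hder_z]
      exact hz_stat (nn j)
    have ht : Tendsto (fun j => (fderiv ℝ J (x (nn j), z (nn j + 1))).comp
        (ContinuousLinearMap.inr ℝ _ _)) atTop (nhds ((fderiv ℝ J (x'', z0)).comp
        (ContinuousLinearMap.inr ℝ _ _))) := (hgz.tendsto _).comp hpair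
    simp only [hzero] at ht
    have h := tendsto_nhds_unique ht tendsto_const_nhds
    rw [hxx] at h
    exact h
  -- partial derivative in x vanishes (x0 is a global minimum of J (·, z0))
  have hder_x : ∀ a b, fderiv ℝ (fun xx => J (xx, b)) a =
      (fderiv ℝ J (a, b)).comp (ContinuousLinearMap.inl ℝ _ _) := fun a b =>
    ((hJd (a, b)).hasFDerivAt.comp a (hasFDerivAt_prodMk_left a b)).fderiv
  have hlocmin : IsLocalMin (fun xx => J (xx, z0)) x0 := Filter.Eventually.of_forall hmin0
  have hx0 : (fderiv ℝ J (x0, z0)).comp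
      (ContinuousLinearMap.inl ℝ (EuclideanSpace ℝ (Fin d)) (EuclideanSpace ℝ (Fin l))) = 0 := by
    rw [← hder_x]
    exact hlocmin.fderiv_eq_zero
  -- combine
  refine ContinuousLinearMap.ext fun w => ?_
  obtain ⟨u, v⟩ := w
  have e1 := DFunLike.congr_fun hx0 u
  have e2 := DFunLike.congr_fun hz0 v
  simp only [ContinuousLinearMap.comp_apply, ContinuousLinearMap.inl_apply,
    ContinuousLinearMap.inr_apply, ContinuousLinearMap.zero_apply] at e1 e2
  have hw : (u, v) = ((u, (0 : EuclideanSpace ℝ (Fin l))) : _) +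
      ((0 : EuclideanSpace ℝ (Fin d)), v) := by
    rw [Prod.mk_add_mk, add_zero, zero_add]
  rw [hw, map_add, e1, e2, add_zero]
  rfl
end

section
/- Let F : ℝ^d → ℝ and G : ℝ^l → ℝ^d be continuously differentiable, and define f(z) = F(G(z)) + (1/2)‖z‖² and, for β > 0, J_β(x,z) = F(x) + (β/2)‖x − G(z)‖² + (1/2)‖z‖². Suppose (x_k, z_k) are points with ∇_x J_{β_k}(x_k, z_k) = 0 and ∇_z J_{β_k}(x_k, z_k) = 0, where β_k → ∞, and suppose (x_k, z_k) → (x̂, ẑ) with x̂ = G(ẑ) and β_k(x_k − G(z_k)) converges. Then ∇f(ẑ) = 0. -/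
open Filter ContinuousLinearMap

section aux
variable {d l : ℕ}

-- x-stationarity derivative computation
lemma xderiv (F : EuclideanSpace ℝ (Fin d) → ℝ) (hF : ContDiff ℝ 1 F)
    (c : EuclideanSpace ℝ (Fin d)) (b C : ℝ) (x : EuclideanSpace ℝ (Fin d)) :
    HasFDerivAt (fun xx => F xx + (b / 2) * ‖xx - c‖ ^ 2 + C)
      (fderiv ℝ F x + innerSL ℝ (b • (x - c))) x := by
  have h1 : HasFDerivAt F (fderiv ℝ F x) x :=
    (hF.differentiable one_ne_zero x).hasFDerivAt
  have h2 : HasFDerivAt (fun xx => ‖xx - c‖ ^ 2)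
      (2 • (innerSL ℝ (x - c)).comp (ContinuousLinearMap.id ℝ _)) x := by
    simpa using ((hasFDerivAt_id x).sub_const c).norm_sq
  have h3 := (h1.add (h2.const_mul (b / 2))).add_const C
  refine h3.congr_fderiv ?_
  ext v
  simp [real_inner_smul_left]
  ring

end aux

section aux2
variable {d l : ℕ}

lemma zderiv (G : EuclideanSpace ℝ (Fin l) → EuclideanSpace ℝ (Fin d)) (hG : ContDiff ℝ 1 G)
    (xk : EuclideanSpace ℝ (Fin d)) (b C : ℝ) (zk : EuclideanSpace ℝ (Fin l)) :
    HasFDerivAt (fun zz => C + (b / 2) * ‖xk - G zz‖ ^ 2 + (1 / 2) * ‖zz‖ ^ 2)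
      (-(innerSL ℝ (b • (xk - G zk))).comp (fderiv ℝ G zk) + innerSL ℝ zk) zk := by
  have hGd : HasFDerivAt G (fderiv ℝ G zk) zk := (hG.differentiable one_ne_zero zk).hasFDerivAt
  have h2 : HasFDerivAt (fun zz => ‖xk - G zz‖ ^ 2)
      (2 • (innerSL ℝ (xk - G zk)).comp ((0 : _) - fderiv ℝ G zk)) zk :=
    ((hasFDerivAt_const xk zk).sub hGd).norm_sq
  have h3 : HasFDerivAt (fun zz : EuclideanSpace ℝ (Fin l) => ‖zz‖ ^ 2)
      (2 • (innerSL ℝ zk).comp (ContinuousLinearMap.id ℝ _)) zk := by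
    simpa using (hasFDerivAt_id zk).norm_sq
  have h4 := ((hasFDerivAt_const C zk).add (h2.const_mul (b / 2))).add (h3.const_mul (1 / 2))
  have heq : (0 : EuclideanSpace ℝ (Fin l) →L[ℝ] ℝ)
        + (b / 2) • (2 • (innerSL ℝ (xk - G zk)).comp ((0 : _) - fderiv ℝ G zk))
        + ((1 : ℝ) / 2) • (2 • (innerSL ℝ zk).comp (ContinuousLinearMap.id ℝ _))
      = -(innerSL ℝ (b • (xk - G zk))).comp (fderiv ℝ G zk) + innerSL ℝ zk := by
    ext v
    simp [real_inner_smul_left, inner_sub_left]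
    ring
  exact heq ▸ h4

lemma fderiv_comp_aux (F : EuclideanSpace ℝ (Fin d) → ℝ) (hF : ContDiff ℝ 1 F)
    (G : EuclideanSpace ℝ (Fin l) → EuclideanSpace ℝ (Fin d)) (hG : ContDiff ℝ 1 G)
    (zhat : EuclideanSpace ℝ (Fin l)) :
    HasFDerivAt (fun zz => F (G zz) + (1 / 2) * ‖zz‖ ^ 2)
      ((fderiv ℝ F (G zhat)).comp (fderiv ℝ G zhat) + innerSL ℝ zhat) zhat := by
  have hGd : HasFDerivAt G (fderiv ℝ G zhat) zhat := (hG.differentiable one_ne_zero zhat).hasFDerivAt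
  have hFd : HasFDerivAt F (fderiv ℝ F (G zhat)) (G zhat) :=
    (hF.differentiable one_ne_zero _).hasFDerivAt
  have h3 : HasFDerivAt (fun zz : EuclideanSpace ℝ (Fin l) => ‖zz‖ ^ 2)
      (2 • (innerSL ℝ zhat).comp (ContinuousLinearMap.id ℝ _)) zhat := by
    simpa using (hasFDerivAt_id zhat).norm_sq
  have h4 := (hFd.comp zhat hGd).add (h3.const_mul (1 / 2))
  have heq : (fderiv ℝ F (G zhat)).comp (fderiv ℝ G zhat)
        + ((1 : ℝ) / 2) • (2 • (innerSL ℝ zhat).comp (ContinuousLinearMap.id ℝ _))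
      = (fderiv ℝ F (G zhat)).comp (fderiv ℝ G zhat) + innerSL ℝ zhat := by
    ext v
    simp
  exact heq ▸ h4

end aux2

set_option maxHeartbeats 1000000 in
theorem stmt_10 {d l : ℕ}
    (F : EuclideanSpace ℝ (Fin d) → ℝ) (hF : ContDiff ℝ 1 F)
    (G : EuclideanSpace ℝ (Fin l) → EuclideanSpace ℝ (Fin d)) (hG : ContDiff ℝ 1 G)
    (f : EuclideanSpace ℝ (Fin l) → ℝ)
    (hf : ∀ z, f z = F (G z) + (1 / 2) * ‖z‖ ^ 2)
    (β : ℕ → ℝ) (hβpos : ∀ k, 0 < β k) (hβ : Tendsto β atTop atTop)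
    (x : ℕ → EuclideanSpace ℝ (Fin d)) (z : ℕ → EuclideanSpace ℝ (Fin l))
    (hxstat : ∀ k, fderiv ℝ
      (fun xx => F xx + (β k / 2) * ‖xx - G (z k)‖ ^ 2 + (1 / 2) * ‖z k‖ ^ 2) (x k) = 0)
    (hzstat : ∀ k, fderiv ℝ
      (fun zz => F (x k) + (β k / 2) * ‖x k - G zz‖ ^ 2 + (1 / 2) * ‖zz‖ ^ 2) (z k) = 0)
    (xhat : EuclideanSpace ℝ (Fin d)) (zhat : EuclideanSpace ℝ (Fin l))
    (hxlim : Tendsto x atTop (nhds xhat)) (hzlim : Tendsto z atTop (nhds zhat))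
    (hfeas : xhat = G zhat)
    (lam : EuclideanSpace ℝ (Fin d))
    (hlam : Tendsto (fun k => (β k) • (x k - G (z k))) atTop (nhds lam)) :
    fderiv ℝ f zhat = 0 := by
  have h1 : ∀ k, fderiv ℝ F (x k) + innerSL ℝ ((β k) • (x k - G (z k))) = 0 := by
    intro k
    have h := hxstat k
    rw [(xderiv F hF (G (z k)) (β k) ((1 / 2) * ‖z k‖ ^ 2) (x k)).fderiv] at h
    exact h
  have h2 : ∀ k, -(innerSL ℝ ((β k) • (x k - G (z k)))).comp (fderiv ℝ G (z k))
      + innerSL ℝ (z k) = 0 := by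
    intro k
    have h := hzstat k
    rw [(zderiv G hG (x k) (β k) (F (x k)) (z k)).fderiv] at h
    exact h
  have hDF : Tendsto (fun k => fderiv ℝ F (x k)) atTop (nhds (fderiv ℝ F xhat)) :=
    ((hF.continuous_fderiv one_ne_zero).tendsto xhat).comp hxlim
  have hDG : Tendsto (fun k => fderiv ℝ G (z k)) atTop (nhds (fderiv ℝ G zhat)) :=
    ((hG.continuous_fderiv one_ne_zero).tendsto zhat).comp hzlim
  have hIL : Tendsto (fun k => innerSL ℝ ((β k) • (x k - G (z k)))) atTop
      (nhds (innerSL ℝ lam)) :=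
    ((innerSL ℝ).continuous.tendsto lam).comp hlam
  have e1 : fderiv ℝ F xhat + innerSL ℝ lam = 0 := by
    have ht := hDF.add hIL
    rw [show (fun k => fderiv ℝ F (x k) + innerSL ℝ ((β k) • (x k - G (z k))))
        = fun _ => (0 : EuclideanSpace ℝ (Fin d) →L[ℝ] ℝ) from funext h1] at ht
    exact (tendsto_nhds_unique tendsto_const_nhds ht).symm
  have hfe : f = fun zz => F (G zz) + (1 / 2) * ‖zz‖ ^ 2 := funext hf
  rw [hfe, (fderiv_comp_aux F hF G hG zhat).fderiv]
  ext v
  -- pointwise version of the z-stationarity limit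
  have hv1 : Tendsto (fun k => (fderiv ℝ G (z k)) v) atTop
      (nhds ((fderiv ℝ G zhat) v)) :=
    ((ContinuousLinearMap.apply ℝ (EuclideanSpace ℝ (Fin d)) v).continuous.tendsto
      (fderiv ℝ G zhat)).comp hDG
  have hv2 : Tendsto (fun k =>
      (inner ℝ ((β k) • (x k - G (z k))) ((fderiv ℝ G (z k)) v) : ℝ)) atTop
      (nhds (inner ℝ lam ((fderiv ℝ G zhat) v))) := hlam.inner hv1
  have hv3 : Tendsto (fun k => (inner ℝ (z k) v : ℝ)) atTop (nhds (inner ℝ zhat v)) :=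
    hzlim.inner tendsto_const_nhds
  have h2v : ∀ k, -(inner ℝ ((β k) • (x k - G (z k))) ((fderiv ℝ G (z k)) v) : ℝ)
      + (inner ℝ (z k) v : ℝ) = 0 := by
    intro k
    have := congrFun (congrArg DFunLike.coe (h2 k)) v
    rw [ContinuousLinearMap.add_apply, ContinuousLinearMap.neg_apply,
      ContinuousLinearMap.comp_apply, innerSL_apply_apply, innerSL_apply_apply,
      ContinuousLinearMap.zero_apply] at this
    exact this
  have e2 : -(inner ℝ lam ((fderiv ℝ G zhat) v) : ℝ) + (inner ℝ zhat v : ℝ) = 0 := by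
    have ht := hv2.neg.add hv3
    rw [show (fun k => -(inner ℝ ((β k) • (x k - G (z k))) ((fderiv ℝ G (z k)) v) : ℝ)
        + (inner ℝ (z k) v : ℝ)) = fun _ => (0 : ℝ) from funext h2v] at ht
    exact (tendsto_nhds_unique tendsto_const_nhds ht).symm
  have hFx : fderiv ℝ F (G zhat) = -(innerSL ℝ lam) := by
    rw [← hfeas]; exact eq_neg_of_add_eq_zero_left e1
  simp only [ContinuousLinearMap.add_apply, ContinuousLinearMap.comp_apply, hFx,
    ContinuousLinearMap.neg_apply, innerSL_apply_apply, ContinuousLinearMap.zero_apply]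
  exact e2
end
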